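/- arXiv:0710.0287 — 6 statements merged into one kernel-verified Lean document; each statement's English description precedes it below -/
import Mathlib

section
/- Let M be a field of characteristic ≠ 2, 3 and let a, b ∈ M with a*(4a+27) ≠ 0, b ≠ 0 and 4*a*b + 27*a + 27*b = 0. Then the splitting fields over M of X^3 + a*X + a and of X^3 + b*X + b coincide; in particular X^3 + a*X + a and X^3 - (27a/(4a+27))*X - (27a/(4a+27)) have the same splitting field over M. -/
/-!
The Möbius map `r ↦ -3r / (3 + 2r)` is an involution (when `3 ≠ 0`), and the relation
`4ab + 27a + 27b = 0` is exactly what makes it carry the roots of `X³ + aX + a` to those of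
`X³ + bX + b`. Since it is defined over the prime field, each root field contains the roots of
the other cubic.
-/

open Polynomial

protected lemma Ring.three_ne_zero {R : Type*} [NonAssocSemiring R] [Nontrivial R]
    (hR : ringChar R ≠ 3) : (3 : R) ≠ 0 := by
  rw [Ne, (by norm_cast : (3 : R) = (3 : ℕ)), ringChar.spec, Nat.dvd_prime Nat.prime_three]
  exact mt (or_iff_left hR).mp CharP.ringChar_ne_one

section Involution

variable {K : Type*} [Field K]

def cubicInvolution (r : K) : K := -3 * r / (3 + 2 * r)

lemma cubicInvolution_mem {S : Type*} [SetLike S K] [SubfieldClass S K] {T : S} {r : K}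
    (hr : r ∈ T) : cubicInvolution r ∈ T := by
  have h2 : (2 : K) ∈ T := ofNat_mem T 2
  have h3 : (3 : K) ∈ T := ofNat_mem T 3
  exact div_mem (mul_mem (neg_mem h3) hr) (add_mem h3 (mul_mem h2 hr))

lemma cubicInvolution_mul {r : K} (hr : 3 + 2 * r ≠ 0) :
    cubicInvolution r * (3 + 2 * r) = -3 * r :=
  div_mul_cancel₀ _ hr

lemma cubicInvolution_cubicInvolution (h3 : (3 : K) ≠ 0) {r : K} (hr : 3 + 2 * r ≠ 0) :
    cubicInvolution (cubicInvolution r) = r := by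
  set s := cubicInvolution r
  have hs : s * (3 + 2 * r) = -3 * r := cubicInvolution_mul hr
  have h9 : (9 : K) ≠ 0 := by
    rw [show (9 : K) = 3 ^ 2 by norm_num]
    exact pow_ne_zero 2 h3
  have hs₀ : (3 + 2 * s) * (3 + 2 * r) = 9 := by linear_combination 2 * hs
  have ht := cubicInvolution_mul (left_ne_zero_of_mul (hs₀ ▸ h9))
  refine mul_left_cancel₀ h9 ?_
  linear_combination (3 + 2 * r) * ht - cubicInvolution s * hs₀ - 3 * hs

variable {a b r : K}

lemma four_mul_add_mul_four_mul_add_eq_729 (hab : 4 * a * b + 27 * a + 27 * b = 0) :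
    (4 * a + 27) * (4 * b + 27) = 729 := by
  linear_combination 4 * hab

lemma four_mul_add_ne_zero_of_relation (h3 : (3 : K) ≠ 0)
    (hab : 4 * a * b + 27 * a + 27 * b = 0) : 4 * a + 27 ≠ 0 := by
  refine left_ne_zero_of_mul (b := 4 * b + 27) ?_
  rw [four_mul_add_mul_four_mul_add_eq_729 hab, show (729 : K) = 3 ^ 6 by norm_num]
  exact pow_ne_zero 6 h3

lemma three_add_two_mul_ne_zero_of_cubic (ha : 4 * a + 27 ≠ 0) (hr : r ^ 3 + a * r + a = 0) :
    3 + 2 * r ≠ 0 := by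
  intro h
  apply ha
  linear_combination (-8 : K) * hr + (4 * r ^ 2 - 6 * r + (4 * a + 9)) * h

lemma cubicInvolution_cubic (ha : 4 * a + 27 ≠ 0) (hab : 4 * a * b + 27 * a + 27 * b = 0)
    (hr : r ^ 3 + a * r + a = 0) :
    cubicInvolution r ^ 3 + b * cubicInvolution r + b = 0 := by
  set d := 3 + 2 * r
  set s := cubicInvolution r
  have hd : d ≠ 0 := three_add_two_mul_ne_zero_of_cubic ha hr
  have hs : s * d = -3 * r := cubicInvolution_mul hd
  -- modulo the relation, `4a + 27` times the numerator of `s³ + bs + b` is `-729 (r³ + ar + a)`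
  have key : ((-3 * r) ^ 3 + b * (-3 * r) * d ^ 2 + b * d ^ 3) * (4 * a + 27) = 0 := by
    linear_combination (-729 : K) * hr + ((-3 * r) * d ^ 2 + d ^ 3) * hab
  have hnum := (mul_eq_zero.mp key).resolve_right ha
  have : (s ^ 3 + b * s + b) * d ^ 3 = 0 := by
    linear_combination (s ^ 2 * d ^ 2 + s * d * (-3 * r) + (-3 * r) ^ 2 + b * d ^ 2) * hs + hnum
  exact (mul_eq_zero.mp this).resolve_right (pow_ne_zero 3 hd)

end Involution

lemma mem_rootSet_cubic {M L : Type*} [Field M] [Field L] [Algebra M L] {c : M} {r : L} :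
    r ∈ (X ^ 3 + C c * X + C c : M[X]).rootSet L ↔
      r ^ 3 + algebraMap M L c * r + algebraMap M L c = 0 := by
  have hne : (X ^ 3 + C c * X + C c : M[X]) ≠ 0 := fun h => by
    simpa using congrArg (coeff · 3) h
  simp [mem_rootSet, hne]

lemma adjoin_rootSet_cubic_le {M L : Type*} [Field M] [Field L] [Algebra M L]
    (h3 : (3 : M) ≠ 0) {a b : M} (hab : 4 * a * b + 27 * a + 27 * b = 0) :
    IntermediateField.adjoin M ((X ^ 3 + C a * X + C a : M[X]).rootSet L) ≤
      IntermediateField.adjoin M ((X ^ 3 + C b * X + C b : M[X]).rootSet L) := by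
  rw [IntermediateField.adjoin_le_iff]
  intro r hr
  rw [mem_rootSet_cubic] at hr
  have h3L : (3 : L) ≠ 0 := by
    simpa only [map_ofNat] using (map_ne_zero (algebraMap M L)).mpr h3
  have habL := congrArg (algebraMap M L) hab
  simp only [map_add, map_mul, map_ofNat, map_zero] at habL
  have ha := four_mul_add_ne_zero_of_relation h3L habL
  rw [← cubicInvolution_cubicInvolution h3L (three_add_two_mul_ne_zero_of_cubic ha hr)]
  refine cubicInvolution_mem (IntermediateField.subset_adjoin _ _ ?_)
  exact mem_rootSet_cubic.mpr (cubicInvolution_cubic ha habL hr)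

theorem stmt5_general {M : Type*} [Field M] (h3 : ringChar M ≠ 3)
    (a b : M) (hab : 4 * a * b + 27 * a + 27 * b = 0) :
    IntermediateField.adjoin M
        ((X ^ 3 + C a * X + C a : M[X]).rootSet (AlgebraicClosure M)) =
      IntermediateField.adjoin M
        ((X ^ 3 + C b * X + C b : M[X]).rootSet (AlgebraicClosure M)) :=
  le_antisymm (adjoin_rootSet_cubic_le (Ring.three_ne_zero h3) hab)
    (adjoin_rootSet_cubic_le (Ring.three_ne_zero h3) (by linear_combination hab))

theorem stmt5 {M : Type*} [Field M] (h2 : ringChar M ≠ 2) (h3 : ringChar M ≠ 3)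
    (a b : M) (ha : a * (4 * a + 27) ≠ 0) (hb : b ≠ 0)
    (hab : 4 * a * b + 27 * a + 27 * b = 0) :
    IntermediateField.adjoin M
        ((X ^ 3 + C a * X + C a : M[X]).rootSet (AlgebraicClosure M)) =
      IntermediateField.adjoin M
        ((X ^ 3 + C b * X + C b : M[X]).rootSet (AlgebraicClosure M)) :=
  stmt5_general h3 a b hab
end

section
/- The splitting field of X^3 - 6*X - 6 over ℚ equals the splitting field of X^3 + 54*X + 54 over ℚ. -/
/-!
The Tschirnhaus transformation `φ = 6 X ^ 2 - 9 X - 24` maps the roots of `X ^ 3 - 6 X - 6` to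
roots of `X ^ 3 + 54 X + 54`, and `ψ = (2 X ^ 2 - 3 X + 72) / 27` maps them back, the two maps
being mutually inverse on the roots. Hence every root of either cubic is a rational polynomial in
a root of the other.
-/

open Polynomial

namespace IntermediateField

theorem adjoin_rootSet_le_of_dvd_comp {K L : Type*} [Field K] [Field L] [Algebra K L]
    {p q : K[X]} (φ ψ : K[X]) (hq : q ≠ 0) (hφ : p ∣ q.comp φ) (hψ : p ∣ ψ.comp φ - X) :
    adjoin K (p.rootSet L) ≤ adjoin K (q.rootSet L) := by
  rw [adjoin_le_iff]
  intro x hx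
  have hpx : aeval x p = 0 := (mem_rootSet.mp hx).2
  have hy : aeval x φ ∈ adjoin K (q.rootSet L) := by
    refine subset_adjoin K _ (mem_rootSet.mpr ⟨hq, ?_⟩)
    rw [← aeval_comp]
    exact aeval_eq_zero_of_dvd_aeval_eq_zero hφ hpx
  have hx_eq : aeval (aeval x φ) ψ = x := by
    have := aeval_eq_zero_of_dvd_aeval_eq_zero hψ hpx
    rwa [map_sub, aeval_comp, aeval_X, sub_eq_zero] at this
  rw [← hx_eq, aeval_coe (adjoin K _) ⟨_, hy⟩]
  exact SetLike.coe_mem _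

end IntermediateField

theorem stmt8 :
    IntermediateField.adjoin ℚ
        ((X ^ 3 - 6 * X - 6 : ℚ[X]).rootSet (AlgebraicClosure ℚ)) =
      IntermediateField.adjoin ℚ
        ((X ^ 3 + 54 * X + 54 : ℚ[X]).rootSet (AlgebraicClosure ℚ)) := by
  let φ : ℚ[X] := 6 * X ^ 2 - 9 * X - 24
  let ψ : ℚ[X] := C (1 / 27) * (2 * X ^ 2 - 3 * X + 72)
  refine le_antisymm
    (IntermediateField.adjoin_rootSet_le_of_dvd_comp φ ψ (Monic.ne_zero (by monicity!)) ?_ ?_)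
    (IntermediateField.adjoin_rootSet_le_of_dvd_comp ψ φ (Monic.ne_zero (by monicity!)) ?_ ?_)
  · exact ⟨216 * X ^ 3 - 972 * X ^ 2 + 162 * X + 2511,
      Polynomial.funext fun t => by simp [φ]; ring⟩
  · exact ⟨C (8 / 3) * X - 8, Polynomial.funext fun t => by simp [φ, ψ]; ring⟩
  · exact ⟨C (1 / 19683) * (8 * X ^ 3 - 36 * X ^ 2 + 486 * X - 1107),
      Polynomial.funext fun t => by simp [ψ]; ring⟩
  · exact ⟨C (1 / 243) * (8 * X - 24), Polynomial.funext fun t => by simp [φ, ψ]; ring⟩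
end

section
/- Let M be a field of characteristic ≠ 2, 3 and m ∈ M. The discriminant of X^3 - m*X^2 - (m+3)*X - 1 equals (m^2 + 3m + 9)^2. In particular, it is a square in M, and if the polynomial is irreducible over M its Galois group over M is cyclic of order 3. -/
/-!
If `r` is a root of `f = X ^ 3 - m * X ^ 2 - (m + 3) * X - 1`, then so are `-1 / (r + 1)` and
`-(r + 1) / r`, and these three are all the roots (Vieta). Hence the splitting field is `M(r)`,
which has degree 3 when `f` is irreducible; `f` is then separable, so its Galois group has
order 3 and is cyclic.
-/

open Polynomial IntermediateField

noncomputable def shanksCubic {R : Type*} [CommRing R] (m : R) : R[X] :=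
  X ^ 3 - C m * X ^ 2 - C (m + 3) * X - 1

section CommRing

variable {R S : Type*} [CommRing R] [CommRing S]

theorem X_sub_C_mul_X_sub_C_mul_X_sub_C (a b c : R) :
    (X - C a) * (X - C b) * (X - C c) =
      X ^ 3 - C (a + b + c) * X ^ 2 + C (a * b + a * c + b * c) * X - C (a * b * c) := by
  simp only [map_add, map_mul]
  ring

variable (m : R)

@[simp]
theorem eval_shanksCubic (x : R) :
    (shanksCubic m).eval x = x ^ 3 - m * x ^ 2 - (m + 3) * x - 1 := by
  simp [shanksCubic]

theorem map_shanksCubic (f : R →+* S) : (shanksCubic m).map f = shanksCubic (f m) := by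
  simp [shanksCubic, map_ofNat f 3]

theorem monic_shanksCubic : (shanksCubic m).Monic := by
  unfold shanksCubic
  monicity!

theorem degree_shanksCubic [Nontrivial R] : (shanksCubic m).degree = 3 := by
  unfold shanksCubic
  compute_degree!

theorem natDegree_shanksCubic [Nontrivial R] : (shanksCubic m).natDegree = 3 :=
  natDegree_eq_of_degree_eq_some (degree_shanksCubic m)

end CommRing

section Field

variable {K : Type*} [Field K] {m r : K}

theorem shanksCubic_eq_of_isRoot (hr : (shanksCubic m).IsRoot r) :
    shanksCubic m = (X - C r) * (X - C (-(r + 1)⁻¹)) * (X - C (-(r + 1) / r)) := by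
  replace hr : r ^ 3 - m * r ^ 2 - (m + 3) * r - 1 = 0 := by simpa using hr
  have hr0 : r ≠ 0 := by
    rintro rfl
    norm_num at hr
  have hr1 : r + 1 ≠ 0 := fun h ↦ one_ne_zero (α := K) <| by
    linear_combination hr + (-r ^ 2 + (m + 1) * r + 2) * h
  have hsum : r + -(r + 1)⁻¹ + -(r + 1) / r = m := by
    field_simp
    linear_combination hr
  have hpair : r * -(r + 1)⁻¹ + r * (-(r + 1) / r) + -(r + 1)⁻¹ * (-(r + 1) / r) = -(m + 3) := by
    field_simp
    linear_combination -hr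
  have hprod : r * -(r + 1)⁻¹ * (-(r + 1) / r) = 1 := by
    field_simp
  rw [X_sub_C_mul_X_sub_C_mul_X_sub_C, hsum, hpair, hprod, shanksCubic, map_neg, map_one]
  ring

theorem eq_or_eq_or_eq_of_isRoot_shanksCubic {x : K} (hr : (shanksCubic m).IsRoot r)
    (hx : (shanksCubic m).IsRoot x) : x = r ∨ x = -(r + 1)⁻¹ ∨ x = -(r + 1) / r := by
  rw [shanksCubic_eq_of_isRoot hr] at hx
  simpa only [IsRoot.def, eval_mul, eval_sub, eval_X, eval_C, mul_eq_zero, sub_eq_zero,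
    or_assoc] using hx

theorem separable_shanksCubic (h : Irreducible (shanksCubic m)) : (shanksCubic m).Separable := by
  refine (separable_iff_derivative_ne_zero h).mpr fun hder ↦ ?_
  have h3 : (3 : K) = 0 := by
    have := congr(coeff $hder 2)
    rw [coeff_derivative] at this
    norm_num [shanksCubic, coeff_X, coeff_one] at this
    exact this
  have hm : m + 3 = 0 := by
    have := congr(coeff $hder 0)
    rw [coeff_derivative] at this
    norm_num [shanksCubic, coeff_X, coeff_one] at this
    linear_combination -this
  -- in characteristic 3 a vanishing derivative forces `m = 0`, and `X ^ 3 - 1` has the root 1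
  have hroot : (shanksCubic m).IsRoot 1 := by
    simp only [IsRoot.def, eval_shanksCubic]
    linear_combination -2 * hm + h3
  have := degree_eq_one_of_irreducible_of_root h hroot
  rw [degree_shanksCubic] at this
  norm_num at this

end Field

theorem IntermediateField.eq_top_of_rootSet_subset {K L : Type*} [Field K] [Field L]
    [Algebra K L] {p : K[X]} [p.IsSplittingField K L] {F : IntermediateField K L}
    (h : p.rootSet L ⊆ F) : F = ⊤ := by
  rw [eq_top_iff, ← (isSplittingField_iff_intermediateField.mp ‹_›).2]
  exact adjoin_le_iff.mpr h

theorem finrank_splittingField_shanksCubic {M : Type*} [Field M] {m : M}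
    (h : Irreducible (shanksCubic m)) :
    Module.finrank M (shanksCubic m).SplittingField = 3 := by
  set L := (shanksCubic m).SplittingField
  obtain ⟨r, hr⟩ := (SplittingField.splits (shanksCubic m)).exists_eval_eq_zero
    (by rw [degree_map, degree_shanksCubic]; norm_num)
  have hroot : (shanksCubic (algebraMap M L m)).IsRoot r := by rwa [← map_shanksCubic]
  have htop : M⟮r⟯ = ⊤ := by
    refine eq_top_of_rootSet_subset (p := shanksCubic m) fun x hx ↦ ?_
    rw [mem_rootSet', aeval_def, ← eval_map, map_shanksCubic] at hx
    have hr : r ∈ M⟮r⟯ := mem_adjoin_simple_self M r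
    rcases eq_or_eq_or_eq_of_isRoot_shanksCubic hroot hx.2 with rfl | rfl | rfl
    · exact hr
    · exact neg_mem (inv_mem (add_mem hr (one_mem _)))
    · exact div_mem (neg_mem (add_mem hr (one_mem _))) hr
  have hminpoly : minpoly M r = shanksCubic m :=
    (minpoly.eq_of_irreducible_of_monic h (by rwa [aeval_def, ← eval_map])
      (monic_shanksCubic m)).symm
  rw [← finrank_top', ← htop, adjoin.finrank (.of_finite M r), hminpoly, natDegree_shanksCubic]

theorem stmt9_general {M : Type*} [Field M] (m : M) :
    ((-m) ^ 2 * (-(m + 3)) ^ 2 - 4 * (-(m + 3)) ^ 3 - 4 * (-m) ^ 3 * (-1)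
        + 18 * (-m) * (-(m + 3)) * (-1) - 27 * (-1 : M) ^ 2 = (m ^ 2 + 3 * m + 9) ^ 2) ∧
      IsSquare ((-m) ^ 2 * (-(m + 3)) ^ 2 - 4 * (-(m + 3)) ^ 3 - 4 * (-m) ^ 3 * (-1)
        + 18 * (-m) * (-(m + 3)) * (-1) - 27 * (-1 : M) ^ 2) ∧
      (Irreducible (X ^ 3 - C m * X ^ 2 - C (m + 3) * X - 1 : M[X]) →
        IsCyclic (X ^ 3 - C m * X ^ 2 - C (m + 3) * X - 1 : M[X]).Gal ∧
          Nat.card (X ^ 3 - C m * X ^ 2 - C (m + 3) * X - 1 : M[X]).Gal = 3) := by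
  have hdisc : (-m) ^ 2 * (-(m + 3)) ^ 2 - 4 * (-(m + 3)) ^ 3 - 4 * (-m) ^ 3 * (-1)
      + 18 * (-m) * (-(m + 3)) * (-1) - 27 * (-1 : M) ^ 2 = (m ^ 2 + 3 * m + 9) ^ 2 := by ring
  refine ⟨hdisc, hdisc ▸ IsSquare.sq _, fun hirr ↦ ?_⟩
  have hcard : Nat.card (shanksCubic m).Gal = 3 := by
    rw [Gal.card_of_separable (separable_shanksCubic hirr),
      finrank_splittingField_shanksCubic hirr]
  exact ⟨isCyclic_of_prime_card hcard, hcard⟩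

theorem stmt9 {M : Type*} [Field M] (h2 : ringChar M ≠ 2) (h3 : ringChar M ≠ 3) (m : M) :
    ((-m) ^ 2 * (-(m + 3)) ^ 2 - 4 * (-(m + 3)) ^ 3 - 4 * (-m) ^ 3 * (-1)
        + 18 * (-m) * (-(m + 3)) * (-1) - 27 * (-1 : M) ^ 2 = (m ^ 2 + 3 * m + 9) ^ 2) ∧
      IsSquare ((-m) ^ 2 * (-(m + 3)) ^ 2 - 4 * (-(m + 3)) ^ 3 - 4 * (-m) ^ 3 * (-1)
        + 18 * (-m) * (-(m + 3)) * (-1) - 27 * (-1 : M) ^ 2) ∧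
      (Irreducible (X ^ 3 - C m * X ^ 2 - C (m + 3) * X - 1 : M[X]) →
        IsCyclic (X ^ 3 - C m * X ^ 2 - C (m + 3) * X - 1 : M[X]).Gal ∧
          Nat.card (X ^ 3 - C m * X ^ 2 - C (m + 3) * X - 1 : M[X]).Gal = 3) :=
  stmt9_general m
end

section
/- Let M be a field of characteristic ≠ 2, 3 and m ∈ M with m^2 + 3m + 9 ≠ 0. Setting n = -m - 3, the splitting fields over M of X^3 - m*X^2 - (m+3)*X - 1 and X^3 - n*X^2 - (n+3)*X - 1 coincide; equivalently, X^3 - m*X^2 - (m+3)*X - 1 and X^3 + (m+3)*X^2 + m*X - 1 have the same splitting field over M. -/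
/-! Up to sign, the second cubic is the reversal of the first, so its roots are exactly the
inverses of the roots of the first, and a field generated by a set of nonzero elements is also
generated by their inverses. -/

open Polynomial

theorem Polynomial.aeval_inv_reverse_eq_zero_iff {F K : Type*} [CommSemiring F] [Field K]
    [Algebra F K] (p : F[X]) {x : K} (hx : x ≠ 0) :
    aeval x⁻¹ p.reverse = 0 ↔ aeval x p = 0 := by
  let := invertibleOfNonzero hx
  simpa only [aeval_def, invOf_eq_inv] using eval₂_reverse_eq_zero_iff (algebraMap F K) x p

theorem IntermediateField.adjoin_le_adjoin_of_forall_inv_mem {F K : Type*} [Field F] [Field K]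
    [Algebra F K] {s t : Set K} (h : ∀ x ∈ s, x ≠ 0 → x⁻¹ ∈ t) : adjoin F s ≤ adjoin F t := by
  rw [adjoin_le_iff]
  intro x hx
  rcases eq_or_ne x 0 with rfl | hx0
  · exact zero_mem _
  · simpa using inv_mem (subset_adjoin F t (h x hx hx0))

theorem Polynomial.adjoin_rootSet_reverse {F K : Type*} [Field F] [Field K] [Algebra F K]
    (p : F[X]) :
    IntermediateField.adjoin F (p.reverse.rootSet K) =
      IntermediateField.adjoin F (p.rootSet K) := by
  rcases eq_or_ne p 0 with rfl | hp
  · simp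
  have hp' : p.reverse ≠ 0 := by simpa using hp
  apply le_antisymm <;>
    refine IntermediateField.adjoin_le_adjoin_of_forall_inv_mem fun x hx hx0 ↦ ?_
  · rw [mem_rootSet_of_ne hp'] at hx
    rw [mem_rootSet_of_ne hp, ← aeval_inv_reverse_eq_zero_iff p (inv_ne_zero hx0), inv_inv]
    exact hx
  · rw [mem_rootSet_of_ne hp] at hx
    rw [mem_rootSet_of_ne hp', aeval_inv_reverse_eq_zero_iff p hx0]
    exact hx

theorem Polynomial.reverse_shanks_cubic {M : Type*} [Field M] (m : M) :
    (X ^ 3 - C m * X ^ 2 - C (m + 3) * X - 1 : M[X]).reverse =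
      -(X ^ 3 + C (m + 3) * X ^ 2 + C m * X - 1) := by
  have hdeg : (X ^ 3 - C m * X ^ 2 - C (m + 3) * X - 1 : M[X]).natDegree = 3 := by
    compute_degree!
  have hX : reflect 3 (X : M[X]) = X ^ 2 := by
    simpa [revAt_le] using reflect_monomial (R := M) 3 1
  rw [reverse, hdeg]
  simp only [reflect_sub, reflect_C_mul, reflect_monomial, reflect_one, hX]
  simp only [le_refl, revAt_le, tsub_self, pow_zero, Nat.reduceLeDiff, Nat.reduceSub, pow_one]
  ring

theorem stmt11_general {M : Type*} [Field M]
    (m : M) :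
    IntermediateField.adjoin M
        ((X ^ 3 - C m * X ^ 2 - C (m + 3) * X - 1 : M[X]).rootSet (AlgebraicClosure M)) =
      IntermediateField.adjoin M
        ((X ^ 3 + C (m + 3) * X ^ 2 + C m * X - 1 : M[X]).rootSet (AlgebraicClosure M)) := by
  rw [← adjoin_rootSet_reverse, reverse_shanks_cubic, rootSet_neg]

theorem stmt11 {M : Type*} [Field M] (h2 : ringChar M ≠ 2) (h3 : ringChar M ≠ 3)
    (m : M) (hΔ : m ^ 2 + 3 * m + 9 ≠ 0) :
    IntermediateField.adjoin M
        ((X ^ 3 - C m * X ^ 2 - C (m + 3) * X - 1 : M[X]).rootSet (AlgebraicClosure M)) =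
      IntermediateField.adjoin M
        ((X ^ 3 + C (m + 3) * X ^ 2 + C m * X - 1 : M[X]).rootSet (AlgebraicClosure M)) :=
  stmt11_general m
end

section
/- Let M be a field of characteristic ≠ 2, 3 and b ∈ M with 2b+3 ≠ 0 and b^2+3b+9 ≠ 0. Set a = -27*(b^2+3b+9)/(2b+3)^2. Then the splitting field over M of X^3 + a*X + a equals the splitting field over M of X^3 - b*X^2 - (b+3)*X - 1, since 4*a*b^2 + 27*b^2 + 12*a*b + 9*a + 81*b + 243 = 0. -/
/-!
The substitution `X ↦ ((2b+3)/9) X + b/3` carries the cubic `X³ - bX² - (b+3)X - 1` to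
`((2b+3)/9)³ (X³ + aX + a)`; the relation `a (2b+3)² = -27 (b²+3b+9)`, which is the displayed
identity, is exactly what makes the coefficients match. An affine bijection of `M`-coefficients
between the two root sets shows that both root sets generate the same field over `M`.
-/

open Polynomial IntermediateField

section AffineChange

variable {F K : Type*} [Field F] [Field K] [Algebra F K]

theorem IntermediateField.adjoin_eq_of_affine_preimage {s t : Set K} {c d : F} (hc : c ≠ 0)
    (hst : ∀ x, x ∈ s ↔ algebraMap F K c * x + algebraMap F K d ∈ t) :
    adjoin F s = adjoin F t := by
  have hc' : algebraMap F K c ≠ 0 := (_root_.map_ne_zero _).mpr hc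
  apply le_antisymm
  · rw [adjoin_le_iff]
    intro x hx
    have hx_eq : x = algebraMap F K c⁻¹ * ((algebraMap F K c * x + algebraMap F K d)
        - algebraMap F K d) := by
      rw [map_inv₀]; field_simp; ring
    rw [hx_eq]
    exact mul_mem (algebraMap_mem _ _)
      (sub_mem (subset_adjoin F t ((hst x).mp hx)) (algebraMap_mem _ _))
  · rw [adjoin_le_iff]
    intro y hy
    set x := (algebraMap F K c)⁻¹ * (y - algebraMap F K d)
    have hy_eq : y = algebraMap F K c * x + algebraMap F K d := by
      simp only [x]; field_simp; ring
    rw [hy_eq] at hy ⊢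
    exact add_mem (mul_mem (algebraMap_mem _ _) (subset_adjoin F s ((hst x).mpr hy)))
      (algebraMap_mem _ _)

theorem Polynomial.mem_rootSet_iff_of_comp_affine {f g : F[X]} (hf : f ≠ 0) {c d k : F}
    (hk : k ≠ 0) (hgf : g.comp (C c * X + C d) = C k * f) (x : K) :
    x ∈ f.rootSet K ↔ algebraMap F K c * x + algebraMap F K d ∈ g.rootSet K := by
  have hg : g ≠ 0 := by
    rintro rfl
    simp [hk, hf] at hgf
  have heval : aeval (algebraMap F K c * x + algebraMap F K d) g
      = algebraMap F K k * aeval x f := by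
    simpa [aeval_comp] using congrArg (aeval x) hgf
  rw [mem_rootSet_of_ne hf, mem_rootSet_of_ne hg, heval, mul_eq_zero_iff_left]
  exact (_root_.map_ne_zero _).mpr hk

theorem Polynomial.adjoin_rootSet_eq_of_comp_affine {f g : F[X]} (hf : f ≠ 0) {c d k : F}
    (hc : c ≠ 0) (hk : k ≠ 0) (hgf : g.comp (C c * X + C d) = C k * f) :
    adjoin F (f.rootSet K) = adjoin F (g.rootSet K) :=
  adjoin_eq_of_affine_preimage hc (mem_rootSet_iff_of_comp_affine hf hk hgf)

end AffineChange

theorem cubic_comp_tschirnhaus {M : Type*} [Field M] {a b : M} (h3 : (3 : M) ≠ 0)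
    (ha : a * (2 * b + 3) ^ 2 = -27 * (b ^ 2 + 3 * b + 9)) :
    (X ^ 3 - C b * X ^ 2 - C (b + 3) * X - 1 : M[X]).comp (C ((2 * b + 3) / 9) * X + C (b / 3))
      = C (((2 * b + 3) / 9) ^ 3) * (X ^ 3 + C a * X + C a) := by
  set c := (2 * b + 3) / 9 with hc
  set d := b / 3 with hd
  have h9 : (9 : M) ≠ 0 := by simpa [show (9 : M) = 3 * 3 by norm_num] using h3
  have hcoeff2 : c ^ 2 * (3 * d - b) = 0 := by rw [hd]; field_simp; ring
  have hcoeff1 : c * (3 * d ^ 2 - 2 * b * d - b - 3) = c ^ 3 * a := by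
    rw [hc, hd]; field_simp; linear_combination (-3 * (2 * b + 3)) * ha
  have hcoeff0 : d ^ 3 - b * d ^ 2 - (b + 3) * d - 1 = c ^ 3 * a := by
    rw [hc, hd]; field_simp; linear_combination (-27 * (2 * b + 3)) * ha
  replace hcoeff2 := congrArg C hcoeff2
  replace hcoeff1 := congrArg C hcoeff1
  replace hcoeff0 := congrArg C hcoeff0
  simp only [map_mul, map_sub, map_add, map_pow, map_ofNat, map_zero, map_one] at hcoeff2 hcoeff1 hcoeff0
  simp only [sub_comp, add_comp, mul_comp, pow_comp, X_comp, C_comp, one_comp, ofNat_comp,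
    map_add, map_ofNat, map_pow]
  linear_combination X ^ 2 * hcoeff2 + X * hcoeff1 + hcoeff0

theorem stmt18_general {M : Type*} [Field M] (h3 : ringChar M ≠ 3)
    (b : M) (hb1 : 2 * b + 3 ≠ 0) :
    4 * (-27 * (b ^ 2 + 3 * b + 9) / (2 * b + 3) ^ 2) * b ^ 2 + 27 * b ^ 2
        + 12 * (-27 * (b ^ 2 + 3 * b + 9) / (2 * b + 3) ^ 2) * b
        + 9 * (-27 * (b ^ 2 + 3 * b + 9) / (2 * b + 3) ^ 2) + 81 * b + 243 = 0 ∧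
      IntermediateField.adjoin M
          ((X ^ 3 + C (-27 * (b ^ 2 + 3 * b + 9) / (2 * b + 3) ^ 2) * X
            + C (-27 * (b ^ 2 + 3 * b + 9) / (2 * b + 3) ^ 2) : M[X]).rootSet
            (AlgebraicClosure M)) =
        IntermediateField.adjoin M
          ((X ^ 3 - C b * X ^ 2 - C (b + 3) * X - 1 : M[X]).rootSet
            (AlgebraicClosure M)) := by
  have h3' : (3 : M) ≠ 0 := fun h ↦
    h3 (CharP.ringChar_of_prime_eq_zero Nat.prime_three (by exact_mod_cast h))
  have h9' : (9 : M) ≠ 0 := by simpa [show (9 : M) = 3 * 3 by norm_num] using h3'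
  set a := -27 * (b ^ 2 + 3 * b + 9) / (2 * b + 3) ^ 2
  have ha : a * (2 * b + 3) ^ 2 = -27 * (b ^ 2 + 3 * b + 9) :=
    div_mul_cancel₀ _ (pow_ne_zero 2 hb1)
  refine ⟨by linear_combination ha, ?_⟩
  have hf : (X ^ 3 + C a * X + C a : M[X]) ≠ 0 := (by monicity! : Monic _).ne_zero
  have hc : (2 * b + 3) / 9 ≠ 0 := div_ne_zero hb1 h9'
  exact adjoin_rootSet_eq_of_comp_affine hf hc (pow_ne_zero 3 hc) (cubic_comp_tschirnhaus h3' ha)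

theorem stmt18 {M : Type*} [Field M] (h2 : ringChar M ≠ 2) (h3 : ringChar M ≠ 3)
    (b : M) (hb1 : 2 * b + 3 ≠ 0) (hb2 : b ^ 2 + 3 * b + 9 ≠ 0) :
    4 * (-27 * (b ^ 2 + 3 * b + 9) / (2 * b + 3) ^ 2) * b ^ 2 + 27 * b ^ 2
        + 12 * (-27 * (b ^ 2 + 3 * b + 9) / (2 * b + 3) ^ 2) * b
        + 9 * (-27 * (b ^ 2 + 3 * b + 9) / (2 * b + 3) ^ 2) + 81 * b + 243 = 0 ∧
      IntermediateField.adjoin M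
          ((X ^ 3 + C (-27 * (b ^ 2 + 3 * b + 9) / (2 * b + 3) ^ 2) * X
            + C (-27 * (b ^ 2 + 3 * b + 9) / (2 * b + 3) ^ 2) : M[X]).rootSet
            (AlgebraicClosure M)) =
        IntermediateField.adjoin M
          ((X ^ 3 - C b * X ^ 2 - C (b + 3) * X - 1 : M[X]).rootSet
            (AlgebraicClosure M)) :=
  stmt18_general h3 b hb1
end

section
/- Let s1, s2, s3 be elements of a field of characteristic ≠ 2 with s1^2 - 3*s2 ≠ 0 and x1, x2, x3 the roots of X^3 - s1*X^2 + s2*X - s3 with Δ = (x2-x1)(x3-x1)(x3-x2) ≠ 0. Then for each i, x_i = (-Δ + s1*s2 - 9*s3 - 2*Δ*z_i)/(2*(s1^2 - 3*s2)) where z1 = (x1-x2)/(x2-x3), z2 = (x2-x3)/(x3-x1), z3 = (x3-x1)/(x1-x2); equivalently z_i = -(Δ - s1*s2 + 9*s3)/(2Δ) - (s1^2-3*s2)*x_i/Δ. -/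
/-!
The cyclic cross-ratio is affine in the root: clearing its denominator against the Vandermonde
product gives `Δ * z₁ = (x₁ - x₂)² (x₃ - x₁)`, and a polynomial identity rewrites twice this as
`-Δ + s₁s₂ - 9s₃ - 2(s₁² - 3s₂)x₁`. Solving this linear relation for `x₁` or for `z₁` gives the two
formulas; since `Δ` and the `sᵢ` are invariant under the cyclic shift `x₁ ↦ x₂ ↦ x₃ ↦ x₁`, the
same relation holds for the other two indices.
-/

section Field

variable {K : Type*} [Field K] {x1 x2 x3 s1 s2 s3 Δ x z : K}

theorem two_mul_vandermonde_mul_crossRatio (hs1 : s1 = x1 + x2 + x3)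
    (hs2 : s2 = x1 * x2 + x1 * x3 + x2 * x3) (hs3 : s3 = x1 * x2 * x3)
    (hΔ : Δ = (x2 - x1) * (x3 - x1) * (x3 - x2)) (hΔ0 : Δ ≠ 0) :
    2 * Δ * ((x1 - x2) / (x2 - x3)) = -Δ + s1 * s2 - 9 * s3 - 2 * (s1 ^ 2 - 3 * s2) * x1 := by
  have h23 : x2 - x3 ≠ 0 := by
    rw [← neg_sub]
    exact neg_ne_zero.mpr (right_ne_zero_of_mul (hΔ ▸ hΔ0))
  have hcleared : Δ * ((x1 - x2) / (x2 - x3)) = (x1 - x2) ^ 2 * (x3 - x1) := by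
    rw [hΔ]
    field_simp
    ring
  rw [mul_assoc, hcleared, hs1, hs2, hs3, hΔ]
  ring

theorem eq_div_of_two_mul_vandermonde_mul (h2 : (2 : K) ≠ 0)
    (hrel : 2 * Δ * z = -Δ + s1 * s2 - 9 * s3 - 2 * (s1 ^ 2 - 3 * s2) * x)
    (hA : s1 ^ 2 - 3 * s2 ≠ 0) :
    x = (-Δ + s1 * s2 - 9 * s3 - 2 * Δ * z) / (2 * (s1 ^ 2 - 3 * s2)) := by
  rw [eq_div_iff (mul_ne_zero h2 hA)]
  linear_combination hrel

theorem eq_sub_of_two_mul_vandermonde_mul (h2 : (2 : K) ≠ 0)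
    (hrel : 2 * Δ * z = -Δ + s1 * s2 - 9 * s3 - 2 * (s1 ^ 2 - 3 * s2) * x) (hΔ0 : Δ ≠ 0) :
    z = -(Δ - s1 * s2 + 9 * s3) / (2 * Δ) - (s1 ^ 2 - 3 * s2) * x / Δ := by
  field_simp
  linear_combination hrel

end Field

theorem stmt19_general {K : Type*} [Field K] (hchar : ringChar K ≠ 2)
    (x1 x2 x3 : K)
    (s1 s2 s3 Δ z1 z2 z3 : K)
    (hs1 : s1 = x1 + x2 + x3) (hs2 : s2 = x1 * x2 + x1 * x3 + x2 * x3)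
    (hs3 : s3 = x1 * x2 * x3)
    (hΔ : Δ = (x2 - x1) * (x3 - x1) * (x3 - x2)) (hΔ0 : Δ ≠ 0)
    (hA : s1 ^ 2 - 3 * s2 ≠ 0)
    (hz1 : z1 = (x1 - x2) / (x2 - x3)) (hz2 : z2 = (x2 - x3) / (x3 - x1))
    (hz3 : z3 = (x3 - x1) / (x1 - x2)) :
    x1 = (-Δ + s1 * s2 - 9 * s3 - 2 * Δ * z1) / (2 * (s1 ^ 2 - 3 * s2)) ∧
      x2 = (-Δ + s1 * s2 - 9 * s3 - 2 * Δ * z2) / (2 * (s1 ^ 2 - 3 * s2)) ∧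
      x3 = (-Δ + s1 * s2 - 9 * s3 - 2 * Δ * z3) / (2 * (s1 ^ 2 - 3 * s2)) ∧
      z1 = -(Δ - s1 * s2 + 9 * s3) / (2 * Δ) - (s1 ^ 2 - 3 * s2) * x1 / Δ ∧
      z2 = -(Δ - s1 * s2 + 9 * s3) / (2 * Δ) - (s1 ^ 2 - 3 * s2) * x2 / Δ ∧
      z3 = -(Δ - s1 * s2 + 9 * s3) / (2 * Δ) - (s1 ^ 2 - 3 * s2) * x3 / Δ := by
  have h2 : (2 : K) ≠ 0 := Ring.two_ne_zero hchar
  have rel1 := two_mul_vandermonde_mul_crossRatio hs1 hs2 hs3 hΔ hΔ0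
  have rel2 := two_mul_vandermonde_mul_crossRatio (x1 := x2) (x2 := x3) (x3 := x1)
    (hs1.trans (by ring)) (hs2.trans (by ring)) (hs3.trans (by ring)) (hΔ.trans (by ring)) hΔ0
  have rel3 := two_mul_vandermonde_mul_crossRatio (x1 := x3) (x2 := x1) (x3 := x2)
    (hs1.trans (by ring)) (hs2.trans (by ring)) (hs3.trans (by ring)) (hΔ.trans (by ring)) hΔ0
  rw [← hz1] at rel1
  rw [← hz2] at rel2
  rw [← hz3] at rel3
  exact ⟨eq_div_of_two_mul_vandermonde_mul h2 rel1 hA, eq_div_of_two_mul_vandermonde_mul h2 rel2 hA,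
    eq_div_of_two_mul_vandermonde_mul h2 rel3 hA, eq_sub_of_two_mul_vandermonde_mul h2 rel1 hΔ0,
    eq_sub_of_two_mul_vandermonde_mul h2 rel2 hΔ0, eq_sub_of_two_mul_vandermonde_mul h2 rel3 hΔ0⟩

theorem stmt19 {K : Type*} [Field K] (hchar : ringChar K ≠ 2)
    (x1 x2 x3 : K) (h12 : x1 ≠ x2) (h13 : x1 ≠ x3) (h23 : x2 ≠ x3)
    (s1 s2 s3 Δ z1 z2 z3 : K)
    (hs1 : s1 = x1 + x2 + x3) (hs2 : s2 = x1 * x2 + x1 * x3 + x2 * x3)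
    (hs3 : s3 = x1 * x2 * x3)
    (hΔ : Δ = (x2 - x1) * (x3 - x1) * (x3 - x2)) (hΔ0 : Δ ≠ 0)
    (hA : s1 ^ 2 - 3 * s2 ≠ 0)
    (hz1 : z1 = (x1 - x2) / (x2 - x3)) (hz2 : z2 = (x2 - x3) / (x3 - x1))
    (hz3 : z3 = (x3 - x1) / (x1 - x2)) :
    x1 = (-Δ + s1 * s2 - 9 * s3 - 2 * Δ * z1) / (2 * (s1 ^ 2 - 3 * s2)) ∧
      x2 = (-Δ + s1 * s2 - 9 * s3 - 2 * Δ * z2) / (2 * (s1 ^ 2 - 3 * s2)) ∧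
      x3 = (-Δ + s1 * s2 - 9 * s3 - 2 * Δ * z3) / (2 * (s1 ^ 2 - 3 * s2)) ∧
      z1 = -(Δ - s1 * s2 + 9 * s3) / (2 * Δ) - (s1 ^ 2 - 3 * s2) * x1 / Δ ∧
      z2 = -(Δ - s1 * s2 + 9 * s3) / (2 * Δ) - (s1 ^ 2 - 3 * s2) * x2 / Δ ∧
      z3 = -(Δ - s1 * s2 + 9 * s3) / (2 * Δ) - (s1 ^ 2 - 3 * s2) * x3 / Δ :=
  stmt19_general hchar x1 x2 x3 s1 s2 s3 Δ z1 z2 z3 hs1 hs2 hs3 hΔ hΔ0 hA hz1 hz2 hz3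
end
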